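/- arXiv:2103.06000 — 3 statements merged into one kernel-verified Lean document; each statement's English description precedes it below -/
import Mathlib

section
/- Let t ∈ ℂ, σ > 0, d ≥ 1 and c : ℕ^d × ℕ^d → ℂ. Assume that for every r₂ > 0 there exist r₁ > 0 and C > 0 such that |c(α,β)| ≤ C · r₂^{|β|} (β!)^{1/(2σ)} · r₁^{−|α|} (α!)^{−1/(2σ)} for all α, β ∈ ℕ^d. Then T_{0,t} c satisfies the same property: for every r₂ > 0 there exist r₁ > 0 and C > 0 such that |(T_{0,t} c)(α,β)| ≤ C · r₂^{|β|} (β!)^{1/(2σ)} · r₁^{−|α|} (α!)^{−1/(2σ)} for all α, β. (This expresses that T_{0,t} maps the space ℓ_{𝓑,♭_σ}(ℕ^{2d}) into itself.) -/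
open Finset

noncomputable section

/-- Size of a multi-index: `|α| = α₁ + ⋯ + α_d`. -/
def msize {d : ℕ} (α : Fin d → ℕ) : ℕ := ∑ i, α i

/-- Factorial of a multi-index: `α! = ∏ᵢ αᵢ!`. -/
def mfact {d : ℕ} (α : Fin d → ℕ) : ℕ := ∏ i, Nat.factorial (α i)

/-- Binomial coefficient of multi-indices: `C(α,γ) = ∏ᵢ choose(αᵢ,γᵢ)`. -/
def mchoose {d : ℕ} (α γ : Fin d → ℕ) : ℕ := ∏ i, Nat.choose (α i) (γ i)

/-- The binomial operator
`(T_{0,t} c)(α,β) = Σ_{γ ≤ α, γ ≤ β} (C(α,γ) C(β,γ))^{1/2} t^{|γ|} c(α−γ, β−γ)`. -/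
def T0 {d : ℕ} (t : ℂ) (c : ((Fin d → ℕ) × (Fin d → ℕ)) → ℂ) :
    ((Fin d → ℕ) × (Fin d → ℕ)) → ℂ := fun p =>
  ∑ γ ∈ Finset.Iic p.1 ∩ Finset.Iic p.2,
    ((Real.sqrt ((mchoose p.1 γ * mchoose p.2 γ : ℕ)) : ℝ) : ℂ) * t ^ (msize γ) *
      c (p.1 - γ, p.2 - γ)

/-!
Each summand of `T_{0,t} c (α,β)` is estimated against the weight at `(α,β)` itself.
Since `(α-γ)!⁻¹ = C(α,γ) γ! / α!` and `(β-γ)! γ! ≤ β!`, passing from `(α-γ, β-γ)` to `(α,β)`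
costs only `C(α,γ)^s ≤ 2^{s|α|}` and a factor `(r₁/r₂)^{|γ|}`, which together with `|t|^{|γ|}`
is at most `max(|t| r₁/r₂, 1)^{|α|}`. The square root of the binomial coefficients is at most
`√2^{|α|+|β|}` and there are at most `2^{|α|}` summands. All these factors are geometric: those in
`|α|` are absorbed by shrinking `r₁`, and `√2^{|β|}` by applying the hypothesis with `r₂/√2`.
-/

section MultiIndex

variable {d : ℕ} {α β γ : Fin d → ℕ}

lemma msize_mono (h : α ≤ β) : msize α ≤ msize β :=
  sum_le_sum fun i _ => h i

lemma msize_sub_add (h : γ ≤ α) : msize (α - γ) + msize γ = msize α := by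
  simp only [msize, ← sum_add_distrib, Pi.sub_apply]
  exact sum_congr rfl fun i _ => Nat.sub_add_cancel (h i)

lemma mfact_pos (α : Fin d → ℕ) : 0 < mfact α :=
  prod_pos fun _ _ => Nat.factorial_pos _

lemma mchoose_pos (h : γ ≤ α) : 0 < mchoose α γ :=
  prod_pos fun i _ => Nat.choose_pos (h i)

lemma mchoose_le_two_pow (α γ : Fin d → ℕ) : mchoose α γ ≤ 2 ^ msize α := by
  rw [mchoose, msize, ← prod_pow_eq_pow_sum]
  exact prod_le_prod' fun _ _ => Nat.choose_le_two_pow _ _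

lemma mchoose_mul_mfact_mul_mfact (h : γ ≤ α) :
    mchoose α γ * mfact γ * mfact (α - γ) = mfact α := by
  simp only [mchoose, mfact, ← prod_mul_distrib, Pi.sub_apply]
  exact prod_congr rfl fun i _ => Nat.choose_mul_factorial_mul_factorial (h i)

lemma mfact_sub_mul_mfact_le (h : γ ≤ α) : mfact (α - γ) * mfact γ ≤ mfact α := by
  rw [← mchoose_mul_mfact_mul_mfact h, mul_comm, mul_assoc, mul_comm (mfact γ)]
  exact Nat.le_mul_of_pos_left _ (mchoose_pos h)

lemma card_Iic_le_two_pow (α : Fin d → ℕ) : #(Iic α) ≤ 2 ^ msize α := by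
  rw [Pi.card_Iic, msize, ← prod_pow_eq_pow_sum]
  exact prod_le_prod' fun i _ => by simpa using Nat.lt_two_pow_self (n := α i)

lemma sqrt_mchoose_mul_mchoose_le (α β γ δ : Fin d → ℕ) :
    Real.sqrt ((mchoose α γ * mchoose β δ : ℕ) : ℝ) ≤
      Real.sqrt 2 ^ msize α * Real.sqrt 2 ^ msize β := by
  rw [Real.sqrt_le_iff, mul_pow, ← pow_mul, ← pow_mul, mul_comm (msize α), mul_comm (msize β),
    pow_mul, pow_mul, Real.sq_sqrt zero_le_two]
  refine ⟨by positivity, ?_⟩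
  exact_mod_cast Nat.mul_le_mul (mchoose_le_two_pow α γ) (mchoose_le_two_pow β δ)

lemma mchoose_rpow_le {s : ℝ} (hs : 0 ≤ s) (α γ : Fin d → ℕ) :
    (mchoose α γ : ℝ) ^ s ≤ ((2 : ℝ) ^ s) ^ msize α := by
  rw [Real.rpow_pow_comm zero_le_two]
  exact Real.rpow_le_rpow (Nat.cast_nonneg _) (by exact_mod_cast mchoose_le_two_pow α γ) hs

lemma mfact_sub_rpow_div_le {s : ℝ} (hs : 0 ≤ s) (hα : γ ≤ α) (hβ : γ ≤ β) :
    (mfact (β - γ) : ℝ) ^ s / (mfact (α - γ) : ℝ) ^ s ≤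
      (mchoose α γ : ℝ) ^ s * ((mfact β : ℝ) ^ s / (mfact α : ℝ) ^ s) := by
  have hpos : ∀ δ : Fin d → ℕ, (0 : ℝ) < mfact δ := fun δ => by exact_mod_cast mfact_pos δ
  rw [← Real.div_rpow (hpos _).le (hpos _).le, ← Real.div_rpow (hpos _).le (hpos _).le,
    ← Real.mul_rpow (Nat.cast_nonneg _) (div_nonneg (hpos _).le (hpos _).le)]
  refine Real.rpow_le_rpow (div_nonneg (hpos _).le (hpos _).le) ?_ hs
  rw [mul_div_assoc', div_le_div_iff₀ (hpos _) (hpos _)]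
  have key : mfact (β - γ) * mfact α ≤ mchoose α γ * mfact β * mfact (α - γ) := by
    rw [← mchoose_mul_mfact_mul_mfact hα]
    calc mfact (β - γ) * (mchoose α γ * mfact γ * mfact (α - γ))
        = mchoose α γ * (mfact (β - γ) * mfact γ) * mfact (α - γ) := by ring
      _ ≤ mchoose α γ * mfact β * mfact (α - γ) := by gcongr; exact mfact_sub_mul_mfact_le hβ
  exact_mod_cast key

end MultiIndex

section Weight

variable {d : ℕ}

/-- The weight `r₂^{|β|} (β!)^s / (r₁^{|α|} (α!)^s)` of `ℓ_{𝓑,♭_σ}`, where `s = 1/(2σ)`. -/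
def flatWeight (s r₁ r₂ : ℝ) (α β : Fin d → ℕ) : ℝ :=
  r₂ ^ msize β * (mfact β : ℝ) ^ s * ((r₁ ^ msize α)⁻¹ * ((mfact α : ℝ) ^ s)⁻¹)

lemma flatWeight_div_mul (s r₁ r₂ K a : ℝ) (α β : Fin d → ℕ) :
    flatWeight s (r₁ / K) (a * r₂) α β =
      K ^ msize α * a ^ msize β * flatWeight s r₁ r₂ α β := by
  rw [flatWeight, flatWeight, div_pow, mul_pow, inv_div]
  ring

lemma flatWeight_sub_le {s r₁ r₂ : ℝ} (hs : 0 ≤ s) (hr₁ : 0 < r₁) (hr₂ : 0 < r₂)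
    {α β γ : Fin d → ℕ} (hα : γ ≤ α) (hβ : γ ≤ β) :
    flatWeight s r₁ r₂ (α - γ) (β - γ) ≤
      (r₁ / r₂) ^ msize γ * (mchoose α γ : ℝ) ^ s * flatWeight s r₁ r₂ α β := by
  calc flatWeight s r₁ r₂ (α - γ) (β - γ)
      = r₂ ^ msize (β - γ) * (r₁ ^ msize (α - γ))⁻¹ *
          ((mfact (β - γ) : ℝ) ^ s / (mfact (α - γ) : ℝ) ^ s) := by
        rw [flatWeight]; ring
    _ ≤ r₂ ^ msize (β - γ) * (r₁ ^ msize (α - γ))⁻¹ *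
          ((mchoose α γ : ℝ) ^ s * ((mfact β : ℝ) ^ s / (mfact α : ℝ) ^ s)) := by
        gcongr
        exact mfact_sub_rpow_div_le hs hα hβ
    _ = (r₁ / r₂) ^ msize γ * (mchoose α γ : ℝ) ^ s * flatWeight s r₁ r₂ α β := by
        rw [flatWeight, ← msize_sub_add hα, ← msize_sub_add hβ, div_pow]
        field_simp
        ring

lemma flatWeight_pos (s : ℝ) {r₁ r₂ : ℝ} (hr₁ : 0 < r₁) (hr₂ : 0 < r₂) (α β : Fin d → ℕ) :
    0 < flatWeight s r₁ r₂ α β := by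
  have := mfact_pos α
  have := mfact_pos β
  unfold flatWeight
  positivity

end Weight

section BinomialOperator

variable {d : ℕ} {t : ℂ} {c : ((Fin d → ℕ) × (Fin d → ℕ)) → ℂ} {s r q C : ℝ}

lemma norm_T0_summand_le (hs : 0 ≤ s) (hr : 0 < r) (hq : 0 < q) (hC : 0 ≤ C)
    (hc : ∀ α β, ‖c (α, β)‖ ≤ C * flatWeight s r q α β)
    {α β γ : Fin d → ℕ} (hα : γ ≤ α) (hβ : γ ≤ β) :
    ‖((Real.sqrt ((mchoose α γ * mchoose β γ : ℕ)) : ℝ) : ℂ) * t ^ msize γ * c (α - γ, β - γ)‖ ≤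
      C * ((Real.sqrt 2 * 2 ^ s * max (‖t‖ * r / q) 1) ^ msize α * Real.sqrt 2 ^ msize β) *
        flatWeight s r q α β := by
  have hw := (flatWeight_pos s hr hq α β).le
  have ht : (‖t‖ * r / q) ^ msize γ ≤ max (‖t‖ * r / q) 1 ^ msize α :=
    (pow_le_pow_left₀ (by positivity) (le_max_left _ _) _).trans
      (pow_le_pow_right₀ (le_max_right _ _) (msize_mono hα))
  calc ‖((Real.sqrt ((mchoose α γ * mchoose β γ : ℕ)) : ℝ) : ℂ) * t ^ msize γ *
          c (α - γ, β - γ)‖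
      = Real.sqrt ((mchoose α γ * mchoose β γ : ℕ) : ℝ) * ‖t‖ ^ msize γ *
          ‖c (α - γ, β - γ)‖ := by
        rw [norm_mul, norm_mul, norm_pow, Complex.norm_real, Real.norm_of_nonneg (Real.sqrt_nonneg _)]
    _ ≤ (Real.sqrt 2 ^ msize α * Real.sqrt 2 ^ msize β) * ‖t‖ ^ msize γ *
          (C * ((r / q) ^ msize γ * (mchoose α γ : ℝ) ^ s * flatWeight s r q α β)) := by
        gcongr
        · exact sqrt_mchoose_mul_mchoose_le α β γ γ
        · exact (hc _ _).trans (mul_le_mul_of_nonneg_left (flatWeight_sub_le hs hr hq hα hβ) hC)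
    _ = C * (Real.sqrt 2 ^ msize α * Real.sqrt 2 ^ msize β) * (‖t‖ * r / q) ^ msize γ *
          (mchoose α γ : ℝ) ^ s * flatWeight s r q α β := by
        rw [mul_div_assoc, mul_pow]; ring
    _ ≤ C * (Real.sqrt 2 ^ msize α * Real.sqrt 2 ^ msize β) * max (‖t‖ * r / q) 1 ^ msize α *
          ((2 : ℝ) ^ s) ^ msize α * flatWeight s r q α β := by
        gcongr
        exact mchoose_rpow_le hs α γ
    _ = C * ((Real.sqrt 2 * 2 ^ s * max (‖t‖ * r / q) 1) ^ msize α * Real.sqrt 2 ^ msize β) *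
          flatWeight s r q α β := by
        rw [mul_pow, mul_pow]; ring

theorem norm_T0_le (hs : 0 ≤ s) (hr : 0 < r) (hq : 0 < q) (hC : 0 ≤ C)
    (hc : ∀ α β, ‖c (α, β)‖ ≤ C * flatWeight s r q α β) (α β : Fin d → ℕ) :
    ‖T0 t c (α, β)‖ ≤
      C * flatWeight s (r / (2 * Real.sqrt 2 * 2 ^ s * max (‖t‖ * r / q) 1))
        (Real.sqrt 2 * q) α β := by
  set B := C * ((Real.sqrt 2 * 2 ^ s * max (‖t‖ * r / q) 1) ^ msize α * Real.sqrt 2 ^ msize β) *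
    flatWeight s r q α β
  have hB : 0 ≤ B := by
    have := flatWeight_pos s hr hq α β
    positivity
  calc ‖T0 t c (α, β)‖
      ≤ #(Iic α ∩ Iic β) • B := (norm_sum_le _ _).trans <| sum_le_card_nsmul _ _ _ fun γ hγ => by
        rw [mem_inter, mem_Iic, mem_Iic] at hγ
        exact norm_T0_summand_le hs hr hq hC hc hγ.1 hγ.2
    _ ≤ 2 ^ msize α * B := by
        rw [nsmul_eq_mul]
        gcongr
        exact_mod_cast (card_le_card inter_subset_left).trans (card_Iic_le_two_pow α)
    _ = _ := by
        rw [flatWeight_div_mul, mul_pow, mul_pow, mul_pow]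
        ring

end BinomialOperator

theorem stmt_2_general (t : ℂ) (σ : ℝ) (hσ : 0 < σ) (d : ℕ)
    (c : ((Fin d → ℕ) × (Fin d → ℕ)) → ℂ)
    (hc : ∀ r₂ > (0:ℝ), ∃ r₁ > (0:ℝ), ∃ C > (0:ℝ), ∀ α β : Fin d → ℕ,
      ‖c (α, β)‖ ≤
        C * (r₂ ^ (msize β) * (mfact β : ℝ) ^ ((1:ℝ)/(2*σ))) *
          ((r₁ ^ (msize α))⁻¹ * ((mfact α : ℝ) ^ ((1:ℝ)/(2*σ)))⁻¹)) :
    ∀ r₂ > (0:ℝ), ∃ r₁ > (0:ℝ), ∃ C > (0:ℝ), ∀ α β : Fin d → ℕ,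
      ‖T0 t c (α, β)‖ ≤
        C * (r₂ ^ (msize β) * (mfact β : ℝ) ^ ((1:ℝ)/(2*σ))) *
          ((r₁ ^ (msize α))⁻¹ * ((mfact α : ℝ) ^ ((1:ℝ)/(2*σ)))⁻¹) := by
  intro r₂ hr₂
  have hs : 0 ≤ (1:ℝ)/(2*σ) := by positivity
  obtain ⟨r₁, hr₁, C, hC, hc⟩ := hc (r₂ / Real.sqrt 2) (by positivity)
  refine ⟨r₁ / (2 * Real.sqrt 2 * 2 ^ ((1:ℝ)/(2*σ)) * max (‖t‖ * r₁ / (r₂ / Real.sqrt 2)) 1),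
    by positivity, C, hC, fun α β => ?_⟩
  have := norm_T0_le (t := t) hs hr₁ (by positivity) hC.le
    (fun α β => (hc α β).trans_eq (mul_assoc _ _ _)) α β
  rwa [mul_div_cancel₀ _ (by positivity), flatWeight, ← mul_assoc] at this

/-- `T_{0,t}` maps `ℓ_{𝓑,♭_σ}(ℕ^{2d})` into itself. -/
theorem stmt_2 (t : ℂ) (σ : ℝ) (hσ : 0 < σ) (d : ℕ) (hd : 1 ≤ d)
    (c : ((Fin d → ℕ) × (Fin d → ℕ)) → ℂ)
    (hc : ∀ r₂ > (0:ℝ), ∃ r₁ > (0:ℝ), ∃ C > (0:ℝ), ∀ α β : Fin d → ℕ,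
      ‖c (α, β)‖ ≤
        C * (r₂ ^ (msize β) * (mfact β : ℝ) ^ ((1:ℝ)/(2*σ))) *
          ((r₁ ^ (msize α))⁻¹ * ((mfact α : ℝ) ^ ((1:ℝ)/(2*σ)))⁻¹)) :
    ∀ r₂ > (0:ℝ), ∃ r₁ > (0:ℝ), ∃ C > (0:ℝ), ∀ α β : Fin d → ℕ,
      ‖T0 t c (α, β)‖ ≤
        C * (r₂ ^ (msize β) * (mfact β : ℝ) ^ ((1:ℝ)/(2*σ))) *
          ((r₁ ^ (msize α))⁻¹ * ((mfact α : ℝ) ^ ((1:ℝ)/(2*σ)))⁻¹) :=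
  stmt_2_general t σ hσ d c hc
end
end

section
/- Let t ∈ ℂ, d ≥ 1 and c : ℕ^d × ℕ^d → ℂ. Assume that for every ρ > 0 there exist r > 0 and C > 0 such that |c(α,β)| ≤ C · exp(−ρ|α| + r|β|) for all α, β ∈ ℕ^d. Then T_{0,t} c satisfies the same property: for every ρ > 0 there exist r > 0 and C > 0 such that |(T_{0,t} c)(α,β)| ≤ C · exp(−ρ|α| + r|β|) for all α, β. (This expresses that T_{0,t} maps the space ℓ_{𝓑,0,1/2}(ℕ^{2d}) into itself; quantitatively, if |c(α,β)| ≤ C e^{−r₁|α| + r₂|β|} with r₂ ≥ r₁ > 0, then |(T_{0,t} c)(α,β)| ≤ C e^{−(r₁−r₀)|α| + (r₂+r₀)|β|} with r₀ = (1/2) log(1+|t|).) -/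
open Finset

noncomputable section

/-! Each coefficient `(C(α,γ) C(β,γ))^{1/2}` is the geometric mean of `C(α,γ)` and `C(β,γ)`, so by
Cauchy–Schwarz and the binomial theorem `Σ_γ (C(α,γ) C(β,γ))^{1/2} |t|^{|γ|}` is at most
`(1+|t|)^{|α|/2} (1+|t|)^{|β|/2} = e^{r₀|α| + r₀|β|}`. Bounding `|c(α-γ, β-γ)|` by
`C e^{-r₁|α| + r₂|β|}`, which is possible because `r₁ ≤ r₂`, gives the quantitative estimate. For
the qualitative one, apply it with the decay rate `ρ + r₀` and a growth rate at least as large. -/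

theorem sum_Iic_choose_mul_pow {R : Type*} [CommSemiring R] (n : ℕ) (x : R) :
    ∑ k ∈ Iic n, (n.choose k : R) * x ^ k = (1 + x) ^ n := by
  rw [← Nat.range_succ_eq_Iic, add_comm (1 : R), add_pow]
  simp [mul_comm]

theorem sum_Iic_mchoose_mul_pow_msize {R : Type*} [CommSemiring R] {d : ℕ} (α : Fin d → ℕ)
    (x : R) : ∑ γ ∈ Iic α, (mchoose α γ : R) * x ^ msize γ = (1 + x) ^ msize α := by
  have hfactor : ∀ γ : Fin d → ℕ,
      (mchoose α γ : R) * x ^ msize γ = ∏ i, ((α i).choose (γ i) : R) * x ^ γ i := by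
    intro γ
    rw [mchoose, msize, Nat.cast_prod, ← prod_pow_eq_pow_sum, ← prod_mul_distrib]
  calc ∑ γ ∈ Iic α, (mchoose α γ : R) * x ^ msize γ
      = ∑ γ ∈ Fintype.piFinset fun i => Iic (α i), ∏ i, ((α i).choose (γ i) : R) * x ^ γ i := by
        simp_rw [hfactor]; rfl
    _ = ∏ i, (1 + x) ^ α i := by
        rw [← prod_univ_sum (fun i => Iic (α i)) fun i k => ((α i).choose k : R) * x ^ k]
        simp_rw [sum_Iic_choose_mul_pow]
    _ = (1 + x) ^ msize α := prod_pow_eq_pow_sum _ _ _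

theorem cast_msize_sub {d : ℕ} {α γ : Fin d → ℕ} (h : γ ≤ α) :
    (msize (α - γ) : ℝ) = msize α - msize γ := by
  simp only [msize, Pi.sub_apply, Nat.cast_sum, ← sum_sub_distrib]
  exact sum_congr rfl fun i _ => Nat.cast_sub (h i)

theorem sum_sqrt_mchoose_mul_pow_le {d : ℕ} (α β : Fin d → ℕ) {x : ℝ} (hx : 0 ≤ x) :
    ∑ γ ∈ Iic α ∩ Iic β, √((mchoose α γ * mchoose β γ : ℕ)) * x ^ msize γ ≤
      √((1 + x) ^ msize α) * √((1 + x) ^ msize β) := by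
  set f : (Fin d → ℕ) → (Fin d → ℕ) → ℝ := fun μ γ => mchoose μ γ * x ^ msize γ
  have hf : ∀ μ γ, 0 ≤ f μ γ := fun μ γ => by positivity
  have hsplit : ∀ γ, √((mchoose α γ * mchoose β γ : ℕ)) * x ^ msize γ =
      √(f α γ) * √(f β γ) := by
    intro γ
    rw [← Real.sqrt_mul (hf α γ), ← Real.sqrt_sq (pow_nonneg hx (msize γ)),
      ← Real.sqrt_mul (by positivity)]
    congr 1
    push_cast [f]
    ring
  have hpartial : ∀ μ, Iic α ∩ Iic β ⊆ Iic μ →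
      √(∑ γ ∈ Iic α ∩ Iic β, f μ γ) ≤ √((1 + x) ^ msize μ) := by
    intro μ hsub
    rw [← sum_Iic_mchoose_mul_pow_msize μ x]
    exact Real.sqrt_le_sqrt (sum_le_sum_of_subset_of_nonneg hsub fun γ _ _ => hf μ γ)
  simp_rw [hsplit]
  refine (Real.sum_sqrt_mul_sqrt_le _ (hf α) (hf β)).trans ?_
  exact mul_le_mul (hpartial α inter_subset_left) (hpartial β inter_subset_right)
    (Real.sqrt_nonneg _) (Real.sqrt_nonneg _)

theorem sqrt_pow_eq_exp_mul {y : ℝ} (hy : 0 < y) (n : ℕ) :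
    √(y ^ n) = Real.exp (1 / 2 * Real.log y * n) := by
  rw [← Real.exp_log (pow_pos hy n), Real.log_pow, ← Real.exp_half]
  ring_nf

theorem norm_T0_le_mul_sum {d : ℕ} (t : ℂ) (c : ((Fin d → ℕ) × (Fin d → ℕ)) → ℂ)
    {r₁ r₂ C : ℝ} (h12 : r₁ ≤ r₂)
    (hc : ∀ α β : Fin d → ℕ, ‖c (α, β)‖ ≤ C * Real.exp (-r₁ * msize α + r₂ * msize β))
    (α β : Fin d → ℕ) :
    ‖T0 t c (α, β)‖ ≤ C * Real.exp (-r₁ * msize α + r₂ * msize β) *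
      ∑ γ ∈ Iic α ∩ Iic β, √((mchoose α γ * mchoose β γ : ℕ)) * ‖t‖ ^ msize γ := by
  have hC : 0 ≤ C :=
    nonneg_of_mul_nonneg_left ((norm_nonneg _).trans (hc 0 0)) (Real.exp_pos _)
  rw [mul_sum]
  refine (norm_sum_le _ _).trans (sum_le_sum fun γ hγ => ?_)
  obtain ⟨hγα, hγβ⟩ : γ ≤ α ∧ γ ≤ β := by simpa using hγ
  have hshift : ‖c (α - γ, β - γ)‖ ≤ C * Real.exp (-r₁ * msize α + r₂ * msize β) := by
    refine (hc _ _).trans ?_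
    rw [cast_msize_sub hγα, cast_msize_sub hγβ]
    gcongr C * Real.exp ?_
    nlinarith [(msize γ).cast_nonneg (α := ℝ)]
  rw [norm_mul, norm_mul, Complex.norm_real, norm_pow, Real.norm_of_nonneg (Real.sqrt_nonneg _),
    mul_comm (C * _)]
  gcongr

theorem norm_T0_le_s6 {d : ℕ} (t : ℂ) (c : ((Fin d → ℕ) × (Fin d → ℕ)) → ℂ)
    {r₁ r₂ C : ℝ} (h12 : r₁ ≤ r₂)
    (hc : ∀ α β : Fin d → ℕ, ‖c (α, β)‖ ≤ C * Real.exp (-r₁ * msize α + r₂ * msize β))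
    (α β : Fin d → ℕ) :
    ‖T0 t c (α, β)‖ ≤
      C * Real.exp (-(r₁ - 1 / 2 * Real.log (1 + ‖t‖)) * msize α +
        (r₂ + 1 / 2 * Real.log (1 + ‖t‖)) * msize β) := by
  have hC : 0 ≤ C :=
    nonneg_of_mul_nonneg_left ((norm_nonneg _).trans (hc 0 0)) (Real.exp_pos _)
  have ht : 0 < 1 + ‖t‖ := by positivity
  calc ‖T0 t c (α, β)‖
      ≤ C * Real.exp (-r₁ * msize α + r₂ * msize β) *
          (√((1 + ‖t‖) ^ msize α) * √((1 + ‖t‖) ^ msize β)) := by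
        refine (norm_T0_le_mul_sum t c h12 hc α β).trans ?_
        gcongr
        exact sum_sqrt_mchoose_mul_pow_le α β (norm_nonneg t)
    _ = _ := by
        rw [sqrt_pow_eq_exp_mul ht, sqrt_pow_eq_exp_mul ht, mul_assoc, ← Real.exp_add,
          ← Real.exp_add]
        ring_nf

theorem stmt_6_general (t : ℂ) (d : ℕ)
    (c : ((Fin d → ℕ) × (Fin d → ℕ)) → ℂ) :
    ((∀ ρ > (0:ℝ), ∃ r > (0:ℝ), ∃ C > (0:ℝ), ∀ α β : Fin d → ℕ,
        ‖c (α, β)‖ ≤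
          C * Real.exp (-ρ * (msize α : ℝ) + r * (msize β : ℝ))) →
      (∀ ρ > (0:ℝ), ∃ r > (0:ℝ), ∃ C > (0:ℝ), ∀ α β : Fin d → ℕ,
        ‖T0 t c (α, β)‖ ≤
          C * Real.exp (-ρ * (msize α : ℝ) + r * (msize β : ℝ)))) ∧
    (∀ r₁ r₂ C : ℝ, 0 < r₁ → r₁ ≤ r₂ → 0 < C →
      (∀ α β : Fin d → ℕ,
        ‖c (α, β)‖ ≤
          C * Real.exp (-r₁ * (msize α : ℝ) + r₂ * (msize β : ℝ))) →
      (∀ α β : Fin d → ℕ,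
        ‖T0 t c (α, β)‖ ≤
          C * Real.exp (-(r₁ - (1/2) * Real.log (1 + ‖t‖)) * (msize α : ℝ) +
            (r₂ + (1/2) * Real.log (1 + ‖t‖)) * (msize β : ℝ)))) := by
  set r₀ := 1 / 2 * Real.log (1 + ‖t‖) with hr₀_def
  have hr₀ : 0 ≤ r₀ := by
    have := Real.log_nonneg (le_add_of_nonneg_right (norm_nonneg t))
    positivity
  refine ⟨fun hdecay ρ hρ => ?_, fun r₁ r₂ C _ h12 _ hc => norm_T0_le_s6 t c h12 hc⟩
  obtain ⟨r, hr, C, hC, hc⟩ := hdecay (ρ + r₀) (by positivity)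
  set r₂ := max r (ρ + r₀)
  have hc' : ∀ α β : Fin d → ℕ, ‖c (α, β)‖ ≤ C * Real.exp (-(ρ + r₀) * msize α + r₂ * msize β) :=
    fun α β => (hc α β).trans (by gcongr; exact le_max_left _ _)
  refine ⟨r₂ + r₀, by positivity, C, hC, fun α β => ?_⟩
  have key := norm_T0_le_s6 t c (le_max_right _ _) hc' α β
  rwa [← hr₀_def, add_sub_cancel_right] at key

/-- `T_{0,t}` maps `ℓ_{𝓑,0,1/2}(ℕ^{2d})` into itself; quantitatively,
if `|c(α,β)| ≤ C e^{−r₁|α| + r₂|β|}` with `r₂ ≥ r₁ > 0`, then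
`|(T_{0,t} c)(α,β)| ≤ C e^{−(r₁−r₀)|α| + (r₂+r₀)|β|}` with `r₀ = (1/2) log(1+|t|)`. -/
theorem stmt_6 (t : ℂ) (d : ℕ) (hd : 1 ≤ d)
    (c : ((Fin d → ℕ) × (Fin d → ℕ)) → ℂ) :
    ((∀ ρ > (0:ℝ), ∃ r > (0:ℝ), ∃ C > (0:ℝ), ∀ α β : Fin d → ℕ,
        ‖c (α, β)‖ ≤
          C * Real.exp (-ρ * (msize α : ℝ) + r * (msize β : ℝ))) →
      (∀ ρ > (0:ℝ), ∃ r > (0:ℝ), ∃ C > (0:ℝ), ∀ α β : Fin d → ℕ,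
        ‖T0 t c (α, β)‖ ≤
          C * Real.exp (-ρ * (msize α : ℝ) + r * (msize β : ℝ)))) ∧
    (∀ r₁ r₂ C : ℝ, 0 < r₁ → r₁ ≤ r₂ → 0 < C →
      (∀ α β : Fin d → ℕ,
        ‖c (α, β)‖ ≤
          C * Real.exp (-r₁ * (msize α : ℝ) + r₂ * (msize β : ℝ))) →
      (∀ α β : Fin d → ℕ,
        ‖T0 t c (α, β)‖ ≤
          C * Real.exp (-(r₁ - (1/2) * Real.log (1 + ‖t‖)) * (msize α : ℝ) +
            (r₂ + (1/2) * Real.log (1 + ‖t‖)) * (msize β : ℝ)))) :=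
  stmt_6_general t d c

end
end

section
/- Let d ≥ 1 and 0 < s < 1/2. Suppose c₁, c₂ : ℕ^d → ℂ satisfy: for each j ∈ {1,2} and every r > 0 there is C > 0 with |c_j(α)| ≤ C e^{r|α|^{1/(2s)}} for all α ∈ ℕ^d. Define c(α) = Σ_{γ ≤ α} C(α,γ)^{1/2} c₁(γ) c₂(α−γ). Then for every r > 0 there is C' > 0 with |c(α)| ≤ C' e^{r|α|^{1/(2s)}} for all α ∈ ℕ^d. (This says that the space 𝒜_s'(ℂ^d) of power series Σ c(α) z^α/√(α!) is closed under pointwise multiplication, since c is the coefficient sequence of the product of the series with coefficients c₁ and c₂.) -/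
/-!
Each term of `prodCoeff c₁ c₂ α` is at most `2^{|α|} C₁ C₂ e^{(r/2)(|γ|^p + |α-γ|^p)}`, and
`|γ|^p + |α-γ|^p ≤ |α|^p` because `x ↦ x^p` is superadditive for `p ≥ 1`. With at most
`(|α|+1)^d` terms this gives the bound `C₁ C₂ e^{(d+1)|α|} e^{(r/2)|α|^p}`, and for `p > 1` the
factor `e^{(d+1)|α|}` is absorbed into a second `e^{(r/2)|α|^p}` at the cost of a constant.
-/

open Finset

noncomputable section

/-- Coefficients of the product of two power series `Σ c_j(α) z^α/√(α!)`:
`c(α) = Σ_{γ ≤ α} C(α,γ)^{1/2} c₁(γ) c₂(α−γ)`. -/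
def prodCoeff {d : ℕ} (c₁ c₂ : (Fin d → ℕ) → ℂ) : (Fin d → ℕ) → ℂ := fun α =>
  ∑ γ ∈ Finset.Iic α,
    ((Real.sqrt ((mchoose α γ : ℕ)) : ℝ) : ℂ) * c₁ γ * c₂ (α - γ)

lemma mchoose_le_two_pow_msize {d : ℕ} (α γ : Fin d → ℕ) : mchoose α γ ≤ 2 ^ msize α := by
  rw [mchoose, msize, ← prod_pow_eq_pow_sum]
  exact prod_le_prod' fun i _ => Nat.choose_le_two_pow _ _

lemma msize_add_msize_sub {d : ℕ} {α γ : Fin d → ℕ} (h : γ ≤ α) :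
    msize γ + msize (α - γ) = msize α := by
  rw [msize, msize, msize, ← sum_add_distrib]
  exact sum_congr rfl fun i _ => Nat.add_sub_cancel' (h i)

lemma card_Iic_le_msize_succ_pow {d : ℕ} (α : Fin d → ℕ) :
    #(Iic α) ≤ (msize α + 1) ^ d := by
  calc #(Iic α) = ∏ i, (α i + 1) := by simp only [Pi.card_Iic, Nat.card_Iic]
    _ ≤ ∏ _i : Fin d, (msize α + 1) := prod_le_prod' fun i _ => ?_
    _ = (msize α + 1) ^ d := by rw [prod_const, card_univ, Fintype.card_fin]
  exact Nat.succ_le_succ (single_le_sum (fun j _ => Nat.zero_le (α j)) (mem_univ i))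

lemma succ_pow_mul_two_pow_le_exp (d n : ℕ) :
    ((n : ℝ) + 1) ^ d * 2 ^ n ≤ Real.exp (((d : ℝ) + 1) * n) := by
  have h2 : (2 : ℝ) ≤ Real.exp 1 := by linarith [Real.add_one_le_exp (1 : ℝ)]
  calc ((n : ℝ) + 1) ^ d * 2 ^ n ≤ Real.exp n ^ d * Real.exp 1 ^ n := by
        gcongr
        exact Real.add_one_le_exp _
    _ = Real.exp (((d : ℝ) + 1) * n) := by
        rw [← Real.exp_nat_mul, ← Real.exp_nat_mul, ← Real.exp_add]
        ring_nf

lemma norm_prodCoeff_le {d : ℕ} (c₁ c₂ : (Fin d → ℕ) → ℂ) (α : Fin d → ℕ) {M : ℝ}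
    (hM : ∀ γ ≤ α, ‖c₁ γ‖ * ‖c₂ (α - γ)‖ ≤ M) :
    ‖prodCoeff c₁ c₂ α‖ ≤ Real.exp (((d : ℝ) + 1) * msize α) * M := by
  have hM0 : 0 ≤ M :=
    (mul_nonneg (norm_nonneg _) (norm_nonneg _)).trans (hM 0 fun i => Nat.zero_le (α i))
  have hterm : ∀ γ ∈ Iic α,
      ‖((Real.sqrt (mchoose α γ : ℕ) : ℝ) : ℂ) * c₁ γ * c₂ (α - γ)‖ ≤ 2 ^ msize α * M := by
    intro γ hγ
    have hsqrt : Real.sqrt (mchoose α γ : ℕ) ≤ 2 ^ msize α :=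
      (Real.sqrt_le_self_iff.2 ((Nat.eq_zero_or_pos _).imp (by simp [·]) Nat.one_le_cast.2)).trans
        (mod_cast mchoose_le_two_pow_msize α γ)
    rw [norm_mul, norm_mul, Complex.norm_real, Real.norm_of_nonneg (Real.sqrt_nonneg _),
      mul_assoc]
    exact mul_le_mul hsqrt (hM γ (mem_Iic.1 hγ)) (by positivity) (by positivity)
  calc ‖prodCoeff c₁ c₂ α‖ ≤ #(Iic α) • (2 ^ msize α * M) :=
        (norm_sum_le _ _).trans (sum_le_card_nsmul _ _ _ hterm)
    _ ≤ ((msize α : ℝ) + 1) ^ d * 2 ^ msize α * M := by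
        rw [nsmul_eq_mul, ← mul_assoc]
        gcongr
        exact_mod_cast card_Iic_le_msize_succ_pow α
    _ ≤ Real.exp (((d : ℝ) + 1) * msize α) * M := by
        gcongr
        exact succ_pow_mul_two_pow_le_exp d (msize α)

lemma exists_mul_le_mul_rpow_add {p : ℝ} (hp : 1 < p) (B : ℝ) {r : ℝ} (hr : 0 < r) :
    ∃ K, ∀ x : ℝ, 0 ≤ x → B * x ≤ r * x ^ p + K := by
  set x₀ := (|B| / r) ^ (p - 1)⁻¹
  refine ⟨|B| * x₀, fun x hx => ?_⟩
  have hK : 0 ≤ |B| * x₀ := by positivity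
  rcases le_or_gt |B| (r * x ^ (p - 1)) with hB | hB
  · have hpow : x ^ p = x ^ (p - 1) * x := by
      conv_lhs => rw [← sub_add_cancel p 1, Real.rpow_add' hx (by linarith), Real.rpow_one]
    calc B * x ≤ r * x ^ (p - 1) * x := mul_le_mul_of_nonneg_right ((le_abs_self B).trans hB) hx
      _ = r * x ^ p := by rw [hpow, mul_assoc]
      _ ≤ r * x ^ p + |B| * x₀ := le_add_of_nonneg_right hK
  · have hx₀ : x ≤ x₀ :=
      (Real.le_rpow_inv_iff_of_pos hx (by positivity) (by linarith)).2 ((le_div_iff₀' hr).2 hB.le)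
    calc B * x ≤ |B| * x := mul_le_mul_of_nonneg_right (le_abs_self B) hx
      _ ≤ |B| * x₀ := mul_le_mul_of_nonneg_left hx₀ (abs_nonneg B)
      _ ≤ r * x ^ p + |B| * x₀ := le_add_of_nonneg_left (by positivity)

/-- Growth of order `p` and minimal type; for `p = 1/(2s)` these are the coefficient sequences
of the space `𝒜_s'(ℂ^d)`. -/
def HasMinimalTypeGrowth {d : ℕ} (p : ℝ) (c : (Fin d → ℕ) → ℂ) : Prop :=
  ∀ r > (0 : ℝ), ∃ C > (0 : ℝ), ∀ α : Fin d → ℕ,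
    ‖c α‖ ≤ C * Real.exp (r * ((msize α : ℝ) ^ p))

lemma exp_msize_rpow_mul_exp_le {d : ℕ} {p : ℝ} (hp : 1 ≤ p) {r : ℝ} (hr : 0 ≤ r)
    {α γ : Fin d → ℕ} (h : γ ≤ α) :
    Real.exp (r * (msize γ : ℝ) ^ p) * Real.exp (r * (msize (α - γ) : ℝ) ^ p) ≤
      Real.exp (r * (msize α : ℝ) ^ p) := by
  rw [← Real.exp_add, ← mul_add, ← msize_add_msize_sub h, Nat.cast_add]
  gcongr
  exact Real.add_rpow_le_rpow_add (by positivity) (by positivity) hp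

theorem hasMinimalTypeGrowth_prodCoeff {d : ℕ} {p : ℝ} (hp : 1 < p) {c₁ c₂ : (Fin d → ℕ) → ℂ}
    (h₁ : HasMinimalTypeGrowth p c₁) (h₂ : HasMinimalTypeGrowth p c₂) :
    HasMinimalTypeGrowth p (prodCoeff c₁ c₂) := by
  intro r hr
  obtain ⟨C₁, hC₁, hc₁⟩ := h₁ (r / 2) (by positivity)
  obtain ⟨C₂, hC₂, hc₂⟩ := h₂ (r / 2) (by positivity)
  obtain ⟨K, hK⟩ := exists_mul_le_mul_rpow_add hp ((d : ℝ) + 1) (half_pos hr)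
  refine ⟨C₁ * C₂ * Real.exp K, by positivity, fun α => ?_⟩
  set n : ℝ := (msize α : ℝ)
  have hfactor : ∀ γ ≤ α, ‖c₁ γ‖ * ‖c₂ (α - γ)‖ ≤ C₁ * C₂ * Real.exp (r / 2 * n ^ p) := by
    intro γ hγ
    calc ‖c₁ γ‖ * ‖c₂ (α - γ)‖
        ≤ C₁ * Real.exp (r / 2 * (msize γ : ℝ) ^ p) *
            (C₂ * Real.exp (r / 2 * (msize (α - γ) : ℝ) ^ p)) :=
          mul_le_mul (hc₁ γ) (hc₂ (α - γ)) (norm_nonneg _) (by positivity)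
      _ ≤ C₁ * C₂ * Real.exp (r / 2 * n ^ p) := by
          rw [mul_mul_mul_comm]
          gcongr
          exact exp_msize_rpow_mul_exp_le hp.le (by positivity) hγ
  calc ‖prodCoeff c₁ c₂ α‖ ≤ Real.exp (((d : ℝ) + 1) * n) * (C₁ * C₂ * Real.exp (r / 2 * n ^ p)) :=
        norm_prodCoeff_le c₁ c₂ α hfactor
    _ ≤ Real.exp (r / 2 * n ^ p + K) * (C₁ * C₂ * Real.exp (r / 2 * n ^ p)) := by
        gcongr
        exact hK n (Nat.cast_nonneg _)
    _ = C₁ * C₂ * Real.exp K * Real.exp (r * n ^ p) := by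
        rw [show r * n ^ p = r / 2 * n ^ p + r / 2 * n ^ p by ring, Real.exp_add, Real.exp_add]
        ring

theorem stmt_17_general (d : ℕ) (s : ℝ) (hs : 0 < s) (hs' : s < 1/2)
    (c₁ c₂ : (Fin d → ℕ) → ℂ)
    (h₁ : ∀ r > (0:ℝ), ∃ C > (0:ℝ), ∀ α : Fin d → ℕ,
      ‖c₁ α‖ ≤ C * Real.exp (r * ((msize α : ℝ) ^ ((1:ℝ)/(2*s)))))
    (h₂ : ∀ r > (0:ℝ), ∃ C > (0:ℝ), ∀ α : Fin d → ℕ,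
      ‖c₂ α‖ ≤ C * Real.exp (r * ((msize α : ℝ) ^ ((1:ℝ)/(2*s))))) :
    ∀ r > (0:ℝ), ∃ C' > (0:ℝ), ∀ α : Fin d → ℕ,
      ‖prodCoeff c₁ c₂ α‖ ≤
        C' * Real.exp (r * ((msize α : ℝ) ^ ((1:ℝ)/(2*s)))) := by
  have hp : 1 < (1 : ℝ) / (2 * s) := by
    rw [lt_div_iff₀ (by positivity)]
    linarith
  exact hasMinimalTypeGrowth_prodCoeff hp h₁ h₂

/-- the space `𝒜_s'(ℂ^d)`, `0 < s < 1/2`, described by coefficient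
bounds `|c(α)| ≤ C e^{r|α|^{1/(2s)}}` for every `r > 0`, is closed under the product
of power series. -/
theorem stmt_17 (d : ℕ) (hd : 1 ≤ d) (s : ℝ) (hs : 0 < s) (hs' : s < 1/2)
    (c₁ c₂ : (Fin d → ℕ) → ℂ)
    (h₁ : ∀ r > (0:ℝ), ∃ C > (0:ℝ), ∀ α : Fin d → ℕ,
      ‖c₁ α‖ ≤ C * Real.exp (r * ((msize α : ℝ) ^ ((1:ℝ)/(2*s)))))
    (h₂ : ∀ r > (0:ℝ), ∃ C > (0:ℝ), ∀ α : Fin d → ℕ,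
      ‖c₂ α‖ ≤ C * Real.exp (r * ((msize α : ℝ) ^ ((1:ℝ)/(2*s))))) :
    ∀ r > (0:ℝ), ∃ C' > (0:ℝ), ∀ α : Fin d → ℕ,
      ‖prodCoeff c₁ c₂ α‖ ≤
        C' * Real.exp (r * ((msize α : ℝ) ^ ((1:ℝ)/(2*s)))) :=
  stmt_17_general d s hs hs' c₁ c₂ h₁ h₂

end
end
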